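/- Let X := {x ∈ ℝⁿ : A x ≥ b} be a nonempty compact polyhedron, let x̂_1, …, x̂_N ∈ X, and let Θ ⊆ ℝⁿ be a nonempty set closed under multiplication by positive scalars such that min_{x ∈ X} θᵀx > 0 for every θ ∈ Θ. Then the optimal value of the inverse relative sub-optimality problem equals that of its normalized dual reformulation: inf_{θ ∈ Θ} (1/N) Σ_{i=1}^N | θᵀx̂_i / (min_{x ∈ X} θᵀx) − 1 | = inf { (1/N) Σ_{i=1}^N | θᵀx̂_i − 1 | : θ ∈ Θ, λ ∈ ℝᵐ, λ ≥ 0, Aᵀλ = θ, bᵀλ = 1 }. -/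

import Mathlib

/-!
For `θ ∈ Θ` linear programming duality gives `min_{x ∈ X} θᵀx = max {bᵀλ : λ ≥ 0, Aᵀλ = θ}`.
Dividing `θ` and an optimal `λ` by this positive value (allowed since `Θ` is a cone) turns every
point of the left-hand problem into a feasible point of the right-hand one with the same
objective. Conversely, if `Aᵀλ = θ`, `λ ≥ 0` and `bᵀλ = 1`, weak duality gives
`1 ≤ min_X θᵀx ≤ θᵀx̂ᵢ`, and then `|θᵀx̂ᵢ / min_X θᵀx - 1| ≤ |θᵀx̂ᵢ - 1|`.

Strong duality is reduced to Farkas' lemma by homogenization, and Farkas' lemma follows from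
the separation theorem for closed cones once one knows that a finitely generated cone is closed:
by Carathéodory's theorem for cones it is a finite union of images of orthants under injective
linear maps.
-/

open scoped Matrix

theorem exists_linearIndepOn_nonneg_sum_eq {ι E : Type*} [AddCommGroup E] [Module ℝ E]
    [DecidableEq ι] (v : ι → E) (s : Finset ι) (c : ι → ℝ) (hc : ∀ i ∈ s, 0 ≤ c i) :
    ∃ t ⊆ s, LinearIndepOn ℝ v t ∧ ∃ c' : ι → ℝ, (∀ i ∈ t, 0 ≤ c' i) ∧
      ∑ i ∈ t, c' i • v i = ∑ i ∈ s, c i • v i := by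
  induction s using Finset.strongInduction generalizing c with
  | H s ih =>
  by_cases hs : LinearIndepOn ℝ v s
  · exact ⟨s, subset_rfl, hs, c, hc, rfl⟩
  obtain ⟨g, hg, j, hjs, hgj⟩ : ∃ g : ι → ℝ, ∑ i ∈ s, g i • v i = 0 ∧ ∃ j ∈ s, 0 < g j := by
    obtain ⟨g, hg, j, hjs, hgj⟩ := not_linearIndepOn_finset_iff.mp hs
    rcases hgj.lt_or_gt with hneg | hpos
    · exact ⟨-g, by simp [hg], j, hjs, neg_pos.mpr hneg⟩
    · exact ⟨g, hg, j, hjs, hpos⟩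
  -- subtract the largest multiple of the relation `g` that keeps `c` nonnegative
  obtain ⟨i₀, hi₀, hmin⟩ := ({i ∈ s | 0 < g i}).exists_min_image (fun i => c i / g i)
    ⟨j, Finset.mem_filter.mpr ⟨hjs, hgj⟩⟩
  rw [Finset.mem_filter] at hi₀
  set r := c i₀ / g i₀
  have hr : 0 ≤ r := div_nonneg (hc i₀ hi₀.1) hi₀.2.le
  set c' : ι → ℝ := fun i => c i - r * g i
  have hc' : ∀ i ∈ s, 0 ≤ c' i := by
    intro i hi
    rcases lt_or_ge 0 (g i) with hgi | hgi
    · have := (le_div_iff₀ hgi).mp (hmin i (Finset.mem_filter.mpr ⟨hi, hgi⟩))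
      simp only [c']
      linarith
    · simp only [c']
      nlinarith [hc i hi]
  have hc'i₀ : c' i₀ = 0 := by simp [c', r, hi₀.2.ne']
  have hsum : ∑ i ∈ s.erase i₀, c' i • v i = ∑ i ∈ s, c i • v i := by
    rw [Finset.sum_erase _ (by simp [hc'i₀])]
    simp [c', sub_smul, mul_smul, Finset.sum_sub_distrib, ← Finset.smul_sum, hg]
  obtain ⟨t, hts, ht, c'', hc'', hsum'⟩ :=
    ih _ (Finset.erase_ssubset hi₀.1) c' fun i hi => hc' i (Finset.mem_of_mem_erase hi)
  exact ⟨t, hts.trans (Finset.erase_subset _ _), ht, c'', hc'', hsum'.trans hsum⟩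

theorem LinearMap.isClosed_image_Ici_zero {ι E : Type*} [Fintype ι] [AddCommGroup E]
    [Module ℝ E] [TopologicalSpace E] [IsTopologicalAddGroup E] [ContinuousSMul ℝ E] [T2Space E]
    (L : (ι → ℝ) →ₗ[ℝ] E) : IsClosed (L '' Set.Ici 0) := by
  classical
  set v : ι → E := fun i => L fun j => if i = j then 1 else 0
  have hL : ∀ c, L c = ∑ i, c i • v i := L.pi_apply_eq_sum_univ
  have hcone : L '' Set.Ici 0 = ⋃ t : {t : Finset ι // LinearIndepOn ℝ v t},
      Fintype.linearCombination ℝ (fun i : t.1 => v i) '' Set.Ici 0 := by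
    ext x
    simp only [Set.mem_image, Set.mem_iUnion, Set.mem_Ici, Fintype.linearCombination_apply]
    constructor
    · rintro ⟨c, hc, rfl⟩
      obtain ⟨t, -, ht, c', hc', hsum⟩ :=
        exists_linearIndepOn_nonneg_sum_eq v Finset.univ c fun i _ => hc i
      refine ⟨⟨t, ht⟩, fun i => c' i, fun i => hc' i i.2, ?_⟩
      rw [hL, ← hsum, ← Finset.sum_coe_sort t]
    · rintro ⟨⟨t, ht⟩, c, hc, rfl⟩
      refine ⟨fun i => if h : i ∈ t then c ⟨i, h⟩ else 0, fun i => ?_, ?_⟩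
      · by_cases h : i ∈ t
        · simpa [h] using hc ⟨i, h⟩
        · simp [h]
      · rw [hL, ← Finset.sum_subset (Finset.subset_univ t) fun i _ hi => by simp [hi],
          ← Finset.sum_coe_sort t]
        exact Finset.sum_congr rfl fun i _ => by simp [i.2]
  rw [hcone]
  exact isClosed_iUnion_of_finite fun t =>
    (LinearMap.isClosedEmbedding_of_injective (LinearMap.ker_eq_bot.mpr
      t.2.fintypeLinearCombination_injective)).isClosedMap _ isClosed_Ici

namespace Matrix

theorem exists_nonneg_transpose_mulVec_eq {ι κ : Type*} [Fintype ι] [Fintype κ]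
    (M : Matrix ι κ ℝ) (y : κ → ℝ) (h : ∀ u, 0 ≤ M *ᵥ u → 0 ≤ y ⬝ᵥ u) :
    ∃ c, 0 ≤ c ∧ Mᵀ *ᵥ c = y := by
  classical
  let C : ProperCone ℝ (κ → ℝ) :=
    ⟨(PointedCone.positive ℝ (ι → ℝ)).map Mᵀ.mulVecLin, Mᵀ.mulVecLin.isClosed_image_Ici_zero⟩
  have hC : ∀ z, z ∈ C ↔ ∃ c, 0 ≤ c ∧ Mᵀ *ᵥ c = z := fun _ => Iff.rfl
  by_contra hy
  obtain ⟨f, hfC, hfy⟩ := C.hyperplane_separation_point (x₀ := y) ((hC y).not.mpr hy)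
  set u : κ → ℝ := fun j => f fun k => if j = k then 1 else 0
  have hf : ∀ z, f z = z ⬝ᵥ u := f.toLinearMap.pi_apply_eq_sum_univ
  have hMu : 0 ≤ M *ᵥ u := fun i => by
    have := hfC _ ((hC _).mpr ⟨Pi.single i 1, Pi.single_nonneg.mpr zero_le_one, rfl⟩)
    rwa [hf, mulVec_single_one] at this
  exact hfy.not_ge (hf y ▸ h u hMu)

theorem replicateCol_unit_mulVec {m α : Type*} [CommSemiring α] (b : m → α) (x : Unit → α) :
    replicateCol Unit b *ᵥ x = x () • b := by
  ext i
  simp [mulVec, dotProduct, mul_comm]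

variable {m n : Type*} [Fintype n] (A : Matrix m n ℝ) (b : m → ℝ)

theorem dotProduct_le_transpose_mulVec_dotProduct [Fintype m] {lam : m → ℝ} {x : n → ℝ}
    (hlam : 0 ≤ lam) (hx : b ≤ A *ᵥ x) : b ⬝ᵥ lam ≤ (Aᵀ *ᵥ lam) ⬝ᵥ x := by
  rw [mulVec_transpose, ← dotProduct_mulVec, dotProduct_comm lam]
  exact dotProduct_le_dotProduct_of_nonneg_right hx hlam

theorem dotProduct_le_sInf_image [Fintype m] {lam : m → ℝ} (hlam : 0 ≤ lam)
    (hne : {x | b ≤ A *ᵥ x}.Nonempty) :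
    b ⬝ᵥ lam ≤ sInf ((fun x => (Aᵀ *ᵥ lam) ⬝ᵥ x) '' {x | b ≤ A *ᵥ x}) :=
  le_csInf (hne.image _) fun _ ⟨_, hx, hv⟩ =>
    hv ▸ dotProduct_le_transpose_mulVec_dotProduct A b hlam hx

theorem mul_le_dotProduct_of_smul_le_mulVec {θ : n → ℝ} {s : ℝ} {x₀ : n → ℝ}
    (hx₀ : b ≤ A *ᵥ x₀) (hs : ∀ x, b ≤ A *ᵥ x → s ≤ θ ⬝ᵥ x) {u : n → ℝ} {γ : ℝ} (hγ : 0 ≤ γ)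
    (hu : γ • b ≤ A *ᵥ u) : γ * s ≤ θ ⬝ᵥ u := by
  have key : ∀ t > 0, γ * s ≤ θ ⬝ᵥ u + t * (θ ⬝ᵥ x₀ - s) := by
    intro t ht
    have hfeas : b ≤ A *ᵥ ((γ + t)⁻¹ • (u + t • x₀)) := fun i => by
      have := hu i
      have := hx₀ i
      simp only [mulVec_smul, mulVec_add, Pi.smul_apply, Pi.add_apply, smul_eq_mul] at *
      rw [le_inv_mul_iff₀ (by positivity)]
      nlinarith
    have := hs _ hfeas
    rw [dotProduct_smul, dotProduct_add, dotProduct_smul, smul_eq_mul, smul_eq_mul,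
      le_inv_mul_iff₀ (by positivity)] at this
    linarith
  refine le_of_forall_pos_le_add fun ε hε => ?_
  have hd : 0 ≤ θ ⬝ᵥ x₀ - s := sub_nonneg.mpr (hs x₀ hx₀)
  calc γ * s ≤ θ ⬝ᵥ u + ε / (θ ⬝ᵥ x₀ - s + 1) * (θ ⬝ᵥ x₀ - s) := key _ (by positivity)
    _ ≤ θ ⬝ᵥ u + ε := by
      gcongr
      rw [div_mul_eq_mul_div, div_le_iff₀ (by positivity)]
      nlinarith

theorem exists_dual_le_dotProduct_of_forall_le [Fintype m] {θ : n → ℝ} {s : ℝ} {x₀ : n → ℝ}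
    (hx₀ : b ≤ A *ᵥ x₀) (hs : ∀ x, b ≤ A *ᵥ x → s ≤ θ ⬝ᵥ x) :
    ∃ lam, 0 ≤ lam ∧ Aᵀ *ᵥ lam = θ ∧ s ≤ b ⬝ᵥ lam := by
  -- Farkas' lemma for the rows `(Aᵢ, -bᵢ)` and `(0, 1)` and the target `(θ, -s)`
  obtain ⟨μ, hμ, hμy⟩ := exists_nonneg_transpose_mulVec_eq
      (fromBlocks A (replicateCol Unit (-b)) 0 (1 : Matrix Unit Unit ℝ))
      (Sum.elim θ fun _ => -s) <| by
    intro w hw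
    rw [← Sum.elim_comp_inl_inr w] at hw ⊢
    set u := w ∘ Sum.inl
    set γ := w (Sum.inr ())
    have hγ : 0 ≤ γ := by simpa [fromBlocks_mulVec] using hw (Sum.inr ())
    have hu : γ • b ≤ A *ᵥ u := fun i => by
      simpa [fromBlocks_mulVec, replicateCol_unit_mulVec, γ] using hw (Sum.inl i)
    have hs' : (fun _ : Unit => -s) ⬝ᵥ (w ∘ Sum.inr) = -(γ * s) := by
      simp [dotProduct, γ, mul_comm]
    rw [sumElim_dotProduct_sumElim, hs']
    linarith [mul_le_dotProduct_of_smul_le_mulVec A b hx₀ hs hγ hu]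
  refine ⟨μ ∘ Sum.inl, fun i => hμ _, ?_, ?_⟩
  · simpa [fromBlocks_transpose, fromBlocks_mulVec] using congrArg (· ∘ Sum.inl) hμy
  · have := congrFun hμy (Sum.inr ())
    simp [fromBlocks_transpose, fromBlocks_mulVec, replicateRow_mulVec_eq_const] at this
    linarith [show (0 : ℝ) ≤ μ (Sum.inr ()) from hμ _]

theorem exists_dual_dotProduct_eq_sInf [Fintype m] {θ : n → ℝ}
    (hne : ((fun x => θ ⬝ᵥ x) '' {x | b ≤ A *ᵥ x}).Nonempty)
    (hbdd : BddBelow ((fun x => θ ⬝ᵥ x) '' {x | b ≤ A *ᵥ x})) :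
    ∃ lam, 0 ≤ lam ∧ Aᵀ *ᵥ lam = θ ∧
      b ⬝ᵥ lam = sInf ((fun x => θ ⬝ᵥ x) '' {x | b ≤ A *ᵥ x}) := by
  obtain ⟨x₀, hx₀⟩ := hne.of_image
  obtain ⟨lam, hlam, rfl, hle⟩ :=
    A.exists_dual_le_dotProduct_of_forall_le b hx₀ fun x hx => csInf_le hbdd ⟨x, hx, rfl⟩
  exact ⟨lam, hlam, rfl, (A.dotProduct_le_sInf_image b hlam ⟨x₀, hx₀⟩).antisymm hle⟩

end Matrix

theorem Real.nonempty_and_bddBelow_of_sInf_pos {s : Set ℝ} (h : 0 < sInf s) :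
    s.Nonempty ∧ BddBelow s := by
  refine ⟨Set.nonempty_iff_ne_empty.mpr ?_, ?_⟩
  · rintro rfl
    simp at h
  · by_contra hs
    simp [Real.sInf_of_not_bddBelow hs] at h

theorem abs_div_sub_one_le_abs_sub_one {a s : ℝ} (hs : 1 ≤ s) (ha : s ≤ a) :
    |a / s - 1| ≤ |a - 1| := by
  have h1 : 1 ≤ a / s := (one_le_div₀ (by linarith)).mpr ha
  rw [abs_of_nonneg (by linarith), abs_of_nonneg (by linarith)]
  linarith [div_le_self (by linarith : 0 ≤ a) hs]

theorem inverse_rso_dual_reformulation_general {n m N : ℕ}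
    (A : Matrix (Fin m) (Fin n) ℝ) (b : Fin m → ℝ)
    (X : Set (Fin n → ℝ)) (hX : X = {x | b ≤ A.mulVec x})
    (xhat : Fin N → Fin n → ℝ) (hxhat : ∀ i, xhat i ∈ X)
    (Θ : Set (Fin n → ℝ))
    (hscale : ∀ θ ∈ Θ, ∀ α : ℝ, 0 < α → α • θ ∈ Θ)
    (hpos : ∀ θ ∈ Θ, 0 < sInf ((fun x => θ ⬝ᵥ x) '' X)) :
    sInf ((fun θ => (1 / (N : ℝ)) *
          ∑ i, |θ ⬝ᵥ xhat i / sInf ((fun x => θ ⬝ᵥ x) '' X) - 1|) '' Θ)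
      = sInf {v : ℝ | ∃ θ ∈ Θ, ∃ lam : Fin m → ℝ,
          0 ≤ lam ∧ Aᵀ.mulVec lam = θ ∧ b ⬝ᵥ lam = 1 ∧
          v = (1 / (N : ℝ)) * ∑ i, |θ ⬝ᵥ xhat i - 1|} := by
  subst hX
  have hval := fun θ hθ => Real.nonempty_and_bddBelow_of_sInf_pos (hpos θ hθ)
  apply csInf_eq_csInf_of_forall_exists_le
  · rintro _ ⟨θ, hθ, rfl⟩
    obtain ⟨lam, hlam, hAlam, hblam⟩ :=
      A.exists_dual_dotProduct_eq_sInf b (hval θ hθ).1 (hval θ hθ).2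
    set S := sInf ((fun x => θ ⬝ᵥ x) '' {x | b ≤ A *ᵥ x})
    have hS : 0 < S := hpos θ hθ
    refine ⟨_, ⟨S⁻¹ • θ, hscale θ hθ _ (inv_pos.mpr hS), S⁻¹ • lam,
      smul_nonneg (inv_nonneg.mpr hS.le) hlam, by rw [Matrix.mulVec_smul, hAlam],
      by rw [dotProduct_smul, hblam, smul_eq_mul, inv_mul_cancel₀ hS.ne'], rfl⟩, le_of_eq ?_⟩
    simp [S, smul_dotProduct, div_eq_inv_mul]
  · rintro _ ⟨θ, hθ, lam, hlam, rfl, hblam, rfl⟩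
    refine ⟨_, ⟨_, hθ, rfl⟩, ?_⟩
    have hS : 1 ≤ sInf ((fun x => (Aᵀ *ᵥ lam) ⬝ᵥ x) '' {x | b ≤ A *ᵥ x}) :=
      hblam ▸ A.dotProduct_le_sInf_image b hlam (hval _ hθ).1.of_image
    gcongr _ * ∑ i, ?_ with i
    exact abs_div_sub_one_le_abs_sub_one hS (csInf_le (hval _ hθ).2 ⟨_, hxhat i, rfl⟩)

/-- The inverse relative sub-optimality problem over the common linear forward problem
`min { θᵀx : A x ≥ b }` equals its normalized dual reformulation, assuming `Θ` is
closed under positive scaling and every `θ ∈ Θ` has positive optimal value. -/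
theorem inverse_rso_dual_reformulation {n m N : ℕ} (hN : 0 < N)
    (A : Matrix (Fin m) (Fin n) ℝ) (b : Fin m → ℝ)
    (X : Set (Fin n → ℝ)) (hX : X = {x | b ≤ A.mulVec x})
    (hne : X.Nonempty) (hcpt : IsCompact X)
    (xhat : Fin N → Fin n → ℝ) (hxhat : ∀ i, xhat i ∈ X)
    (Θ : Set (Fin n → ℝ)) (hΘne : Θ.Nonempty)
    (hscale : ∀ θ ∈ Θ, ∀ α : ℝ, 0 < α → α • θ ∈ Θ)
    (hpos : ∀ θ ∈ Θ, 0 < sInf ((fun x => θ ⬝ᵥ x) '' X)) :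
    sInf ((fun θ => (1 / (N : ℝ)) *
          ∑ i, |θ ⬝ᵥ xhat i / sInf ((fun x => θ ⬝ᵥ x) '' X) - 1|) '' Θ)
      = sInf {v : ℝ | ∃ θ ∈ Θ, ∃ lam : Fin m → ℝ,
          0 ≤ lam ∧ Aᵀ.mulVec lam = θ ∧ b ⬝ᵥ lam = 1 ∧
          v = (1 / (N : ℝ)) * ∑ i, |θ ⬝ᵥ xhat i - 1|} :=
  inverse_rso_dual_reformulation_general A b X hX xhat hxhat Θ hscale hpos
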